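/- arXiv:1204.1607 — 3 statements merged into one kernel-verified Lean document; each statement's English description precedes it below -/
import Mathlib

section
/- Let kQ be the path algebra of a finite quiver Q over a field k, and let I be an admissible ideal. If ρ = λ₁w₁ + ... + λ_m w_m is a relation in I with all λ_i nonzero that is not strongly minimal (i.e., there exists a nonempty proper subset J of {1,...,m} and nonzero scalars b_i for i ∈ J with Σ_{i∈J} b_i w_i ∈ I), then there exists a strongly minimal relation ρ' = μ₁w₁ + ... + μ_m w_m ∈ I with μ₁ = λ₁. -/
/-!
The path algebra `kQ` of a finite quiver is modelled by a `k`-vector space `V`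
(in which the distinct paths `w i` form a linearly independent family), and the
admissible ideal `I` is modelled by the submodule of `V` it determines.  A
relation `∑ i, μ i • w i` is *strongly minimal* if for every nonempty proper
subset `J` of its support and every choice of nonzero scalars `b i` (`i ∈ J`),
the combination `∑ i ∈ J, b i • w i` does not lie in `I`.
-/
open Classical in
def IsStronglyMinimal {k V : Type*} [Field k] [AddCommGroup V] [Module k V]
    (I : Submodule k V) {m : ℕ} (w : Fin m → V) (μ : Fin m → k) : Prop :=
  ∀ J : Finset (Fin m), J.Nonempty →
    J ⊂ Finset.univ.filter (fun i => μ i ≠ 0) →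
    ∀ b : Fin m → k, (∀ i ∈ J, b i ≠ 0) → (∑ i ∈ J, b i • w i) ∉ I

/-!
Among all relations `∑ μ i • w i ∈ I` with prescribed first coefficient, take one with the
fewest nonzero coefficients; it is strongly minimal. Indeed, a witness `∑ i ∈ J, b i • w i ∈ I`
against strong minimality gives a relation with smaller support and the same first coefficient:
if the first index lies in `J`, rescale the witness itself; otherwise subtract from `μ` the
multiple of the witness that kills a coefficient `μ j` with `j ∈ J`.
-/

open Finset

theorem sum_ite_mem_smul {k V ι : Type*} [Semiring k] [AddCommMonoid V] [Module k V]
    [Fintype ι] [DecidableEq ι] (J : Finset ι) (b : ι → k) (w : ι → V) :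
    ∑ i, (if i ∈ J then b i else 0) • w i = ∑ i ∈ J, b i • w i := by
  simp only [ite_smul, zero_smul, sum_ite_mem, univ_inter]

section StronglyMinimal

open Classical

variable {k V : Type*} [Field k] [AddCommGroup V] [Module k V] {I : Submodule k V} {m : ℕ}
  {w : Fin m → V} {μ b : Fin m → k} {J : Finset (Fin m)} {i₀ : Fin m}

theorem exists_sum_mem_support_subset_of_mem (c : k) (hJI : ∑ i ∈ J, b i • w i ∈ I)
    (hi₀ : i₀ ∈ J) (hb : b i₀ ≠ 0) :
    ∃ μ' : Fin m → k, μ' i₀ = c ∧ ∑ i, μ' i • w i ∈ I ∧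
      univ.filter (fun i => μ' i ≠ 0) ⊆ J := by
  refine ⟨fun i => c / b i₀ * if i ∈ J then b i else 0, ?_, ?_, ?_⟩
  · simp [hi₀, hb]
  · simp only [mul_smul, ← smul_sum, sum_ite_mem_smul]
    exact I.smul_mem _ hJI
  · intro i hi
    by_contra hiJ
    simp [hiJ] at hi

theorem exists_sum_mem_support_subset_erase_of_notMem (hμ : ∑ i, μ i • w i ∈ I)
    (hJI : ∑ i ∈ J, b i • w i ∈ I) (hJ : J ⊆ univ.filter (fun i => μ i ≠ 0))
    (hi₀ : i₀ ∉ J) {j : Fin m} (hj : j ∈ J) (hb : b j ≠ 0) :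
    ∃ μ' : Fin m → k, μ' i₀ = μ i₀ ∧ ∑ i, μ' i • w i ∈ I ∧
      univ.filter (fun i => μ' i ≠ 0) ⊆ (univ.filter (fun i => μ i ≠ 0)).erase j := by
  refine ⟨fun i => μ i - μ j / b j * if i ∈ J then b i else 0, by simp [hi₀], ?_, ?_⟩
  · simp only [sub_smul, sum_sub_distrib, mul_smul, ← smul_sum, sum_ite_mem_smul]
    exact I.sub_mem hμ (I.smul_mem _ hJI)
  · intro i hi
    rw [mem_filter] at hi
    have hij : i ≠ j := by
      rintro rfl
      exact hi.2 (by simp [hj, hb])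
    have hμi : μ i ≠ 0 := fun h0 => by
      have hiJ : i ∉ J := fun hiJ => (mem_filter.1 (hJ hiJ)).2 h0
      exact hi.2 (by simp [hiJ, h0])
    simp [hij, hμi]

theorem exists_support_card_lt_of_not_isStronglyMinimal (i₀ : Fin m)
    (hμ : ∑ i, μ i • w i ∈ I) (hnsm : ¬ IsStronglyMinimal I w μ) :
    ∃ μ' : Fin m → k, μ' i₀ = μ i₀ ∧ ∑ i, μ' i • w i ∈ I ∧
      #(univ.filter fun i => μ' i ≠ 0) < #(univ.filter fun i => μ i ≠ 0) := by
  simp only [IsStronglyMinimal, not_forall, not_not] at hnsm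
  obtain ⟨J, ⟨j, hj⟩, hJ, b, hb, hJI⟩ := hnsm
  by_cases hi₀ : i₀ ∈ J
  · obtain ⟨μ', h0, hmem, hsupp⟩ :=
      exists_sum_mem_support_subset_of_mem (μ i₀) hJI hi₀ (hb i₀ hi₀)
    exact ⟨μ', h0, hmem, (card_le_card hsupp).trans_lt (card_lt_card hJ)⟩
  · obtain ⟨μ', h0, hmem, hsupp⟩ :=
      exists_sum_mem_support_subset_erase_of_notMem hμ hJI hJ.subset hi₀ hj (hb j hj)
    exact ⟨μ', h0, hmem, (card_le_card hsupp).trans_lt (card_erase_lt_of_mem (hJ.subset hj))⟩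

theorem exists_isStronglyMinimal_of_sum_mem (i₀ : Fin m) (hμ : ∑ i, μ i • w i ∈ I) :
    ∃ μ' : Fin m → k, μ' i₀ = μ i₀ ∧ ∑ i, μ' i • w i ∈ I ∧
      IsStronglyMinimal I w μ' := by
  induction hn : #(univ.filter fun i => μ i ≠ 0) using Nat.strong_induction_on
    generalizing μ with
  | _ n ih =>
  by_cases hmin : IsStronglyMinimal I w μ
  · exact ⟨μ, rfl, hμ, hmin⟩
  obtain ⟨μ', h0, hmem, hlt⟩ := exists_support_card_lt_of_not_isStronglyMinimal i₀ hμ hmin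
  obtain ⟨ν, hν0, hνI, hν⟩ := ih _ (hn ▸ hlt) hmem rfl
  exact ⟨ν, hν0.trans h0, hνI, hν⟩

end StronglyMinimal

theorem exists_stronglyMinimal_relation_general {k V : Type*} [Field k] [AddCommGroup V]
    [Module k V] (I : Submodule k V) {m : ℕ} (w : Fin (m + 1) → V)
    (lam : Fin (m + 1) → k)
    (hmem : (∑ i, lam i • w i) ∈ I) :
    ∃ μ : Fin (m + 1) → k, μ 0 = lam 0 ∧ (∑ i, μ i • w i) ∈ I ∧
      IsStronglyMinimal I w μ :=
  exists_isStronglyMinimal_of_sum_mem 0 hmem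

/-- If `ρ = λ₁ w₁ + ⋯ + λ_m w_m` is a relation in the
admissible ideal `I` with all `λ i` nonzero which is not strongly minimal, then
there is a strongly minimal relation `ρ' = μ₁ w₁ + ⋯ + μ_m w_m ∈ I` with
`μ₁ = λ₁`. -/
theorem exists_stronglyMinimal_relation {k V : Type*} [Field k] [AddCommGroup V]
    [Module k V] (I : Submodule k V) {m : ℕ} (w : Fin (m + 1) → V)
    (hw : LinearIndependent k w) (lam : Fin (m + 1) → k)
    (hlam : ∀ i, lam i ≠ 0)
    (hmem : (∑ i, lam i • w i) ∈ I)
    (hnsm : ¬ IsStronglyMinimal I w lam) :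
    ∃ μ : Fin (m + 1) → k, μ 0 = lam 0 ∧ (∑ i, μ i • w i) ∈ I ∧
      IsStronglyMinimal I w μ :=
  exists_stronglyMinimal_relation_general I w lam hmem
end

section
/- Let C = kQ/I be a constrained bound quiver algebra (dim e_x C e_y ≤ 1 for every arrow x → y) and δ a normalized derivation of C. Then for every arrow α there exists a scalar λ_α with δ(α) = λ_α α, and for every path w = α₁α₂⋯α_t one has δ(w) = (λ_{α₁} + ⋯ + λ_{α_t}) w. In particular δ is uniquely determined by its values on arrows. -/
/-- A derivation of a (possibly noncommutative) `k`-algebra. -/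
def IsDerivation {k C : Type*} [CommSemiring k] [Ring C] [Algebra k C]
    (d : C →ₗ[k] C) : Prop :=
  ∀ a b : C, d (a * b) = a * d b + d a * b

/-- Let `C = kQ/I` be a constrained bound quiver algebra
(modelled by a `k`-algebra `C` with a complete set `e` of primitive orthogonal
idempotents indexed by the vertices `ι`, and a family `arr` of nonzero arrows
with sources `s` and targets `t` spanning the one-dimensional spaces
`e (s a) * C * e (t a)`), and let `δ` be a normalized derivation of `C`.  Then
for every arrow `a` there is a scalar `lam a` with `δ (arr a) = lam a • arr a`,
and for every path `w = α₁α₂⋯α_t` (a composable list of arrows)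
`δ w = (lam α₁ + ⋯ + lam α_t) • w`. -/
theorem constrained_normalized_derivation_scalars {k C ι A : Type*} [Field k]
    [Ring C] [Algebra k C] [Fintype ι]
    (e : ι → C)
    (hidem : ∀ x, e x * e x = e x)
    (horth : ∀ x y, x ≠ y → e x * e y = 0)
    (hsum : (∑ x, e x) = 1)
    (s t : A → ι) (arr : A → C)
    (harr : ∀ a, arr a = e (s a) * arr a * e (t a))
    (harr0 : ∀ a, arr a ≠ 0)
    (hconstrained : ∀ (a : A) (c : C), c = e (s a) * c * e (t a) →
      ∃ μ : k, c = μ • arr a)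
    (δ : C →ₗ[k] C) (hδ : IsDerivation δ)
    (hnorm : ∀ x, δ (e x) = 0) :
    ∃ lam : A → k,
      (∀ a, δ (arr a) = lam a • arr a) ∧
      (∀ l : List A, l.Chain' (fun a b => t a = s b) →
        δ ((l.map arr).prod) = ((l.map lam).sum) • (l.map arr).prod) := by
  have key : ∀ a, ∃ μ : k, δ (arr a) = μ • arr a := by
    intro a
    apply hconstrained
    calc δ (arr a) = δ (e (s a) * (arr a * e (t a))) := by
          rw [← mul_assoc, ← harr]
      _ = e (s a) * δ (arr a * e (t a)) + δ (e (s a)) * (arr a * e (t a)) := hδ _ _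
      _ = e (s a) * δ (arr a) * e (t a) := by
          rw [hδ, hnorm, hnorm, mul_zero, zero_add, zero_mul, add_zero, mul_assoc]
  choose lam hlam using key
  refine ⟨lam, hlam, ?_⟩
  have hone : δ 1 = 0 := by
    have h := hδ 1 1
    simp only [one_mul, mul_one] at h
    have : δ 1 + δ 1 = δ 1 + 0 := by rw [add_zero, ← h]
    exact (add_left_cancel this)
  intro l hc
  induction l with
  | nil => simp [hone]
  | cons a rest ih =>
    simp only [List.map_cons, List.prod_cons, List.sum_cons]
    rw [hδ, ih hc.tail, hlam, mul_smul_comm, smul_mul_assoc, add_smul, add_comm]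
end

section
/- Let C = kQ/I be a constrained bound quiver algebra, δ a normalized derivation of C with δ(α) = λ_α α for each arrow α. If ρ = Σ_{i=1}^m a_i w_i is a strongly minimal relation in I (all a_i ≠ 0, m ≥ 2), then λ_{w₁} = λ_{w₂} = ⋯ = λ_{w_m}, where λ_w denotes the sum of λ_α over the arrows α of the path w. -/
/-- Let `C = kQ/I` be a constrained bound quiver algebra
(with complete set `e` of primitive orthogonal idempotents, and nonzero
arrows `arr` spanning the arrow spaces), `δ` a normalized derivation of `C`
with `δ (arr a) = lam a • arr a` for each arrow `a`.  If
`ρ = ∑ i, a i • w i` is a strongly minimal relation in `I` (`m ≥ 2`, all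
`a i ≠ 0`; in `C = kQ/I` this means `∑ i, a i • w i = 0` while
`∑ i ∈ J, b i • w i ≠ 0` for all nonempty proper `J` and nonzero scalars `b`),
where `w i` is the product in `C` of the composable list of arrows `p i`, then
`lam (w 1) = ⋯ = lam (w m)`, `lam` of a path being the sum of `lam` over its
arrows. -/
theorem stronglyMinimal_relation_constant_lambda {k C ι A : Type*} [Field k]
    [Ring C] [Algebra k C] [Fintype ι]
    (e : ι → C)
    (hidem : ∀ x, e x * e x = e x)
    (horth : ∀ x y, x ≠ y → e x * e y = 0)
    (hsum : (∑ x, e x) = 1)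
    (s t : A → ι) (arr : A → C)
    (harr : ∀ a, arr a = e (s a) * arr a * e (t a))
    (harr0 : ∀ a, arr a ≠ 0)
    (hconstrained : ∀ (a : A) (c : C), c = e (s a) * c * e (t a) →
      ∃ μ : k, c = μ • arr a)
    (δ : C →ₗ[k] C) (hδ : IsDerivation δ)
    (hnorm : ∀ x, δ (e x) = 0)
    (lam : A → k) (hlam : ∀ a, δ (arr a) = lam a • arr a)
    {m : ℕ} (hm : 2 ≤ m)
    (a : Fin m → k) (ha : ∀ i, a i ≠ 0)
    (p : Fin m → List A)
    (hpath : ∀ i, (p i).Chain' (fun a b => t a = s b))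
    (hrel : (∑ i, a i • ((p i).map arr).prod) = 0)
    (hsm : ∀ J : Finset (Fin m), J.Nonempty → J ≠ Finset.univ →
      ∀ b : Fin m → k, (∀ i ∈ J, b i ≠ 0) →
        (∑ i ∈ J, b i • ((p i).map arr).prod) ≠ 0) :
    ∀ i j, ((p i).map lam).sum = ((p j).map lam).sum := by
  classical
  have hδ1 : δ 1 = 0 := by
    have h := hδ 1 1; simpa using h
  have key : ∀ l : List A,
      δ ((l.map arr).prod) = ((l.map lam).sum) • (l.map arr).prod := by
    intro l
    induction l with
    | nil => simpa using hδ1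
    | cons x xs ih =>
        simp only [List.map_cons, List.prod_cons, List.sum_cons]
        rw [hδ (arr x) ((xs.map arr).prod), ih, hlam]
        rw [mul_smul_comm, smul_mul_assoc, add_smul]
        abel
  set L : Fin m → k := fun i => ((p i).map lam).sum with hL
  have h1 : (∑ i, (a i * L i) • ((p i).map arr).prod) = 0 := by
    have := congrArg δ hrel
    rw [map_sum, map_zero] at this
    rw [← this]
    refine Finset.sum_congr rfl fun i _ => ?_
    rw [map_smul, key, smul_smul]
  suffices hsuf : ∀ i j : Fin m, L i = L j by exact hsuf
  intro i j
  by_contra hne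
  have h2 : (∑ i, (a i * (L i - L j)) • ((p i).map arr).prod) = 0 := by
    have h3 : (∑ i, (a i * (L i - L j)) • ((p i).map arr).prod)
        = (∑ i, (a i * L i) • ((p i).map arr).prod)
          - L j • (∑ i, a i • ((p i).map arr).prod) := by
      rw [Finset.smul_sum, ← Finset.sum_sub_distrib]
      refine Finset.sum_congr rfl fun i _ => ?_
      rw [smul_smul, ← sub_smul]
      ring_nf
    rw [h3, h1, hrel, smul_zero, sub_zero]
  set J : Finset (Fin m) := Finset.univ.filter (fun i => L i ≠ L j) with hJ
  have hiJ : i ∈ J := by simp [hJ, hne]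
  have hjJ : j ∉ J := by simp [hJ]
  have hJne : J ≠ Finset.univ := fun h => hjJ (h ▸ Finset.mem_univ j)
  refine hsm J ⟨i, hiJ⟩ hJne (fun i => a i * (L i - L j)) ?_ ?_
  · intro x hx
    have hx' : L x ≠ L j := by simpa [hJ] using hx
    exact mul_ne_zero (ha x) (sub_ne_zero.mpr hx')
  · rw [← h2]
    refine Finset.sum_subset (Finset.subset_univ J) ?_
    intro x _ hx
    have : L x = L j := by simpa [hJ] using hx
    simp [this]
end
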